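/- arXiv:2207.08999 — 4 statements merged into one kernel-verified Lean document; each statement's English description precedes it below -/
import Mathlib

section
/- Let α1, α2, β1, β2, γ, κ, λ be real numbers with α1 > 0, α2 > 0, γ > 0, κ > 0, λ ∈ (0,1), β1 > β2 > 0, set ρ = α2/(α1 + α2) and B = ρ·β1 + (1-ρ)·β2. Define the 3×3 real matrices T with first row entries all equal to (1-λ)·β1·ρ, second row entries all equal to (1-λ)·β2·(1-ρ), third row entries all equal to λ·B, and Σ = !![-(α1+γ+κ), α2, 0; α1, -(α2+γ+κ), 0; γ, γ, -κ]. Then Σ is invertible and the characteristic polynomial of the next generation matrix K = -T·Σ⁻¹ is X²·(X - B/κ); in particular the eigenvalues of K are 0 (with multiplicity two) and B/κ, so the basic reproduction number of system (MB) is R0 = (ρ·β1 + (1-ρ)·β2)/κ. -/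
/-! Every row of `T` is constant, so `T = u 𝟙ᵀ`, and every column of `Σ` sums to `-κ` (each
infected class is left at total rate `κ`), so `𝟙ᵀ Σ⁻¹ = -κ⁻¹ 𝟙ᵀ`. Hence `K = κ⁻¹ u 𝟙ᵀ` has
rank one and characteristic polynomial `X² (X - κ⁻¹ ∑ uᵢ)`, where
`∑ uᵢ = (1 - λ) B + λ B = B`. -/

open Matrix Polynomial

namespace Matrix

variable {n K : Type*} [Fintype n] [DecidableEq n] [Field K]

theorem vecMul_inv_eq_inv_smul_of_vecMul_eq_smul {S : Matrix n n K} (hS : IsUnit S)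
    {w : n → K} {c : K} (hc : c ≠ 0) (h : w ᵥ* S = c • w) : w ᵥ* S⁻¹ = c⁻¹ • w := by
  have hdet : IsUnit S.det := (isUnit_iff_isUnit_det S).mp hS
  calc w ᵥ* S⁻¹ = c⁻¹ • (c • w) ᵥ* S⁻¹ := by
        rw [smul_vecMul, smul_smul, inv_mul_cancel₀ hc, one_smul]
    _ = c⁻¹ • w := by rw [← h, vecMul_vecMul, mul_nonsing_inv S hdet, vecMul_one]

theorem charpoly_neg_vecMulVec_one_mul_inv {S : Matrix n n K} (hS : IsUnit S) {κ : K}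
    (hκ : κ ≠ 0) (hcol : 1 ᵥ* S = -κ • 1) (u : n → K) :
    (-vecMulVec u 1 * S⁻¹).charpoly
      = X ^ Fintype.card n - C ((∑ i, u i) / κ) * X ^ (Fintype.card n - 1) := by
  have hrow : 1 ᵥ* S⁻¹ = -κ⁻¹ • (1 : n → K) := by
    rw [vecMul_inv_eq_inv_smul_of_vecMul_eq_smul hS (neg_ne_zero.mpr hκ) hcol, inv_neg]
  have hK : -vecMulVec u 1 * S⁻¹ = vecMulVec (κ⁻¹ • u) 1 := by
    rw [neg_mul, vecMulVec_mul, hrow, vecMulVec_smul, smul_vecMulVec, neg_smul, neg_neg]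
  rw [hK, charpoly_vecMulVec, smul_eq_C_mul, dotProduct_one]
  simp only [Pi.smul_apply, smul_eq_mul, inv_mul_eq_div, Finset.sum_div]

end Matrix

theorem NGM_charpoly_MB_general (a1 a2 b1 b2 gam kap lam : ℝ)
    (ha1 : 0 < a1) (ha2 : 0 < a2)
    (hgam : 0 < gam) (hkap : 0 < kap)
    (rho B : ℝ) (hB : B = rho * b1 + (1 - rho) * b2) :
    IsUnit (!![-(a1 + gam + kap), a2, 0;
               a1, -(a2 + gam + kap), 0;
               gam, gam, -kap] : Matrix (Fin 3) (Fin 3) ℝ) ∧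
    (-(!![(1 - lam) * b1 * rho, (1 - lam) * b1 * rho, (1 - lam) * b1 * rho;
          (1 - lam) * b2 * (1 - rho), (1 - lam) * b2 * (1 - rho), (1 - lam) * b2 * (1 - rho);
          lam * B, lam * B, lam * B] : Matrix (Fin 3) (Fin 3) ℝ) *
        (!![-(a1 + gam + kap), a2, 0;
            a1, -(a2 + gam + kap), 0;
            gam, gam, -kap] : Matrix (Fin 3) (Fin 3) ℝ)⁻¹).charpoly
      = X ^ 2 * (X - C (B / kap)) := by
  set S : Matrix (Fin 3) (Fin 3) ℝ :=
    !![-(a1 + gam + kap), a2, 0; a1, -(a2 + gam + kap), 0; gam, gam, -kap]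
  set u : Fin 3 → ℝ := ![(1 - lam) * b1 * rho, (1 - lam) * b2 * (1 - rho), lam * B]
  have hdet : S.det = -(kap * (gam + kap) * (a1 + a2 + gam + kap)) := by
    simp only [S, det_fin_three, of_apply, cons_val', cons_val_zero, cons_val_one, cons_val,
      cons_val_fin_one]
    ring
  have hS : IsUnit S := by
    rw [isUnit_iff_isUnit_det, hdet, isUnit_iff_ne_zero]
    have : 0 < kap * (gam + kap) * (a1 + a2 + gam + kap) := by positivity
    linarith
  have hcol : 1 ᵥ* S = -kap • 1 := by
    ext j
    fin_cases j <;>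
      simp only [S, vecMul, dotProduct, Fin.sum_univ_three, Pi.one_apply, Pi.smul_apply, of_apply,
        Fin.zero_eta, Fin.mk_one, Fin.reduceFinMk, Fin.isValue, cons_val', cons_val_zero,
        cons_val_one, cons_val, cons_val_fin_one, smul_eq_mul] <;>
      ring
  have hT : !![(1 - lam) * b1 * rho, (1 - lam) * b1 * rho, (1 - lam) * b1 * rho;
      (1 - lam) * b2 * (1 - rho), (1 - lam) * b2 * (1 - rho), (1 - lam) * b2 * (1 - rho);
      lam * B, lam * B, lam * B] = vecMulVec u 1 := by
    ext i j
    fin_cases i <;> fin_cases j <;> simp [u, vecMulVec]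
  have hsum : ∑ i, u i = B := by
    simp only [u, hB, Fin.sum_univ_three, cons_val_zero, cons_val_one, cons_val]
    ring
  refine ⟨hS, ?_⟩
  rw [hT, charpoly_neg_vecMulVec_one_mul_inv hS hkap.ne' hcol, hsum]
  simp only [Fintype.card_fin]
  ring

theorem NGM_charpoly_MB (a1 a2 b1 b2 gam kap lam : ℝ)
    (ha1 : 0 < a1) (ha2 : 0 < a2)
    (hgam : 0 < gam) (hkap : 0 < kap)
    (hlam0 : 0 < lam) (hlam1 : lam < 1)
    (hb2 : 0 < b2) (hb : b2 < b1)
    (rho B : ℝ) (hrho : rho = a2 / (a1 + a2)) (hB : B = rho * b1 + (1 - rho) * b2) :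
    IsUnit (!![-(a1 + gam + kap), a2, 0;
               a1, -(a2 + gam + kap), 0;
               gam, gam, -kap] : Matrix (Fin 3) (Fin 3) ℝ) ∧
    (-(!![(1 - lam) * b1 * rho, (1 - lam) * b1 * rho, (1 - lam) * b1 * rho;
          (1 - lam) * b2 * (1 - rho), (1 - lam) * b2 * (1 - rho), (1 - lam) * b2 * (1 - rho);
          lam * B, lam * B, lam * B] : Matrix (Fin 3) (Fin 3) ℝ) *
        (!![-(a1 + gam + kap), a2, 0;
            a1, -(a2 + gam + kap), 0;
            gam, gam, -kap] : Matrix (Fin 3) (Fin 3) ℝ)⁻¹).charpoly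
      = X ^ 2 * (X - C (B / kap)) :=
  NGM_charpoly_MB_general a1 a2 b1 b2 gam kap lam ha1 ha2 hgam hkap rho B hB
end

section
/- Let β1, β2, ρ be real numbers with 0 < β2 < β1 and ρ ∈ (0,1), and set B = ρ·β1 + (1-ρ)·β2, Υα1 = -ρ·(1-ρ)·(β1-β2)/B, Υα2 = ρ·(1-ρ)·(β1-β2)/B, and Υρ = 1 - β2/B. Then Υα1 < Υα2 < Υρ; in particular Υα1 < 0 so R0 is always least sensitive to α1. -/
/-! Writing `B = ρ β₁ + (1 - ρ) β₂`, one has `B - β₂ = ρ (β₁ - β₂)`, so `Υρ = ρ (β₁ - β₂) / B`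
is positive, `Υα₂ = (1 - ρ) Υρ` and `Υα₁ = -Υα₂`. The ordering is then that of
`-(1 - ρ) u < (1 - ρ) u < u` for `u > 0` and `0 < 1 - ρ < 1`. -/

lemma convexComb_sub_right (b1 b2 rho : ℝ) :
    rho * b1 + (1 - rho) * b2 - b2 = rho * (b1 - b2) := by
  ring

lemma lt_convexComb_of_lt {b1 b2 rho : ℝ} (hb2b1 : b2 < b1) (hrho0 : 0 < rho) :
    b2 < rho * b1 + (1 - rho) * b2 := by
  have := mul_pos hrho0 (sub_pos.mpr hb2b1)
  linarith [convexComb_sub_right b1 b2 rho]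

lemma one_sub_div_convexComb {b1 b2 rho : ℝ} (hB : rho * b1 + (1 - rho) * b2 ≠ 0) :
    1 - b2 / (rho * b1 + (1 - rho) * b2) = rho * (b1 - b2) / (rho * b1 + (1 - rho) * b2) := by
  rw [← convexComb_sub_right, sub_div, div_self hB]

theorem sensitivity_alpha_order (b1 b2 rho : ℝ)
    (hb2 : 0 < b2) (hb2b1 : b2 < b1) (hrho0 : 0 < rho) (hrho1 : rho < 1) :
    (-(rho * (1 - rho) * (b1 - b2)) / (rho * b1 + (1 - rho) * b2) <
      rho * (1 - rho) * (b1 - b2) / (rho * b1 + (1 - rho) * b2) ∧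
     rho * (1 - rho) * (b1 - b2) / (rho * b1 + (1 - rho) * b2) <
      1 - b2 / (rho * b1 + (1 - rho) * b2)) ∧
    -(rho * (1 - rho) * (b1 - b2)) / (rho * b1 + (1 - rho) * b2) < 0 := by
  set B := rho * b1 + (1 - rho) * b2
  have hB : 0 < B := hb2.trans (lt_convexComb_of_lt hb2b1 hrho0)
  set u := rho * (b1 - b2) / B
  have hu : 0 < u := div_pos (mul_pos hrho0 (sub_pos.mpr hb2b1)) hB
  have hα2 : rho * (1 - rho) * (b1 - b2) / B = (1 - rho) * u := by
    simp only [u]; ring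
  have hα1 : -(rho * (1 - rho) * (b1 - b2)) / B = -((1 - rho) * u) := by
    rw [neg_div, hα2]
  have hα2_pos : 0 < (1 - rho) * u := mul_pos (sub_pos.mpr hrho1) hu
  rw [one_sub_div_convexComb hB.ne', hα1, hα2]
  exact ⟨⟨neg_lt_self hα2_pos, mul_lt_of_lt_one_left hu (by linarith)⟩, neg_neg_of_pos hα2_pos⟩
end

section
/- Let β1, β2, ρ be real numbers with 0 < β2 < β1 and ρ ∈ (0,1), and set B = ρ·β1 + (1-ρ)·β2, Υα1 = -ρ·(1-ρ)·(β1-β2)/B, Υα2 = ρ·(1-ρ)·(β1-β2)/B, Υρ = 1 - β2/B, Υβ1 = 1 - (1-ρ)·β2/B, and Υβ2 = 1 - ρ·β1/B. If β2/β1 < ρ < β2/(β1 - β2), then Υα1 < Υα2 < Υβ2 < Υρ < Υβ1. -/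
/-! Writing `1 - x / B = (B - x) / B`, all five indices become fractions over the common positive
denominator `B`, with numerators `∓ρ(1-ρ)(β₁-β₂)`, `(1-ρ)β₂`, `ρ(β₁-β₂)` and `ρβ₁`. The two middle
comparisons of numerators are exactly the hypotheses `ρ(β₁-β₂) < β₂` and `β₂ < ρβ₁`. -/

theorem sensitivity_numerators_order {b1 b2 rho : ℝ}
    (hb2 : 0 < b2) (hb2b1 : b2 < b1) (hrho0 : 0 < rho) (hrho1 : rho < 1)
    (h1 : b2 < rho * b1) (h2 : rho * (b1 - b2) < b2) :
    -(rho * (1 - rho) * (b1 - b2)) < rho * (1 - rho) * (b1 - b2) ∧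
    rho * (1 - rho) * (b1 - b2) < (1 - rho) * b2 ∧
    (1 - rho) * b2 < rho * (b1 - b2) ∧
    rho * (b1 - b2) < rho * b1 := by
  have h1rho : 0 < 1 - rho := sub_pos.2 hrho1
  have hprod : 0 < rho * (1 - rho) * (b1 - b2) := by
    have := sub_pos.2 hb2b1
    positivity
  refine ⟨by linarith, ?_, by linarith, mul_lt_mul_of_pos_left (sub_lt_self b1 hb2) hrho0⟩
  calc rho * (1 - rho) * (b1 - b2) = (1 - rho) * (rho * (b1 - b2)) := by ring
    _ < (1 - rho) * b2 := mul_lt_mul_of_pos_left h2 h1rho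

theorem sensitivity_order_MB_case_c_general (b1 b2 rho : ℝ)
    (hb2 : 0 < b2) (hb2b1 : b2 < b1) (hrho1 : rho < 1)
    (h1 : b2 / b1 < rho) (h2 : rho < b2 / (b1 - b2)) :
    -(rho * (1 - rho) * (b1 - b2)) / (rho * b1 + (1 - rho) * b2) <
      rho * (1 - rho) * (b1 - b2) / (rho * b1 + (1 - rho) * b2) ∧
    rho * (1 - rho) * (b1 - b2) / (rho * b1 + (1 - rho) * b2) <
      1 - rho * b1 / (rho * b1 + (1 - rho) * b2) ∧
    1 - rho * b1 / (rho * b1 + (1 - rho) * b2) <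
      1 - b2 / (rho * b1 + (1 - rho) * b2) ∧
    1 - b2 / (rho * b1 + (1 - rho) * b2) <
      1 - (1 - rho) * b2 / (rho * b1 + (1 - rho) * b2) := by
  have hb1 : 0 < b1 := hb2.trans hb2b1
  have hrho0 : 0 < rho := (div_pos hb2 hb1).trans h1
  obtain ⟨n1, n2, n3, n4⟩ := sensitivity_numerators_order hb2 hb2b1 hrho0 hrho1
    ((div_lt_iff₀ hb1).mp h1) ((lt_div_iff₀ (sub_pos.2 hb2b1)).mp h2)
  set B := rho * b1 + (1 - rho) * b2 with hB_def
  have hB : 0 < B := add_pos (mul_pos hrho0 hb1) (mul_pos (sub_pos.2 hrho1) hb2)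
  simp only [one_sub_div hB.ne']
  refine ⟨?_, ?_, ?_, ?_⟩ <;> apply div_lt_div_of_pos_right _ hB <;> linarith

theorem sensitivity_order_MB_case_c (b1 b2 rho : ℝ)
    (hb2 : 0 < b2) (hb2b1 : b2 < b1) (hrho0 : 0 < rho) (hrho1 : rho < 1)
    (h1 : b2 / b1 < rho) (h2 : rho < b2 / (b1 - b2)) :
    -(rho * (1 - rho) * (b1 - b2)) / (rho * b1 + (1 - rho) * b2) <
      rho * (1 - rho) * (b1 - b2) / (rho * b1 + (1 - rho) * b2) ∧
    rho * (1 - rho) * (b1 - b2) / (rho * b1 + (1 - rho) * b2) <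
      1 - rho * b1 / (rho * b1 + (1 - rho) * b2) ∧
    1 - rho * b1 / (rho * b1 + (1 - rho) * b2) <
      1 - b2 / (rho * b1 + (1 - rho) * b2) ∧
    1 - b2 / (rho * b1 + (1 - rho) * b2) <
      1 - (1 - rho) * b2 / (rho * b1 + (1 - rho) * b2) :=
  sensitivity_order_MB_case_c_general b1 b2 rho hb2 hb2b1 hrho1 h1 h2
end

section
/- Let β1, β2, ρ be real numbers with 0 < β2 < β1 and ρ ∈ (0,1), and set B = ρ·β1 + (1-ρ)·β2, Υα1 = -ρ·(1-ρ)·(β1-β2)/B, Υα2 = ρ·(1-ρ)·(β1-β2)/B, Υρ = 1 - β2/B, Υβ1 = 1 - (1-ρ)·β2/B, and Υβ2 = 1 - ρ·β1/B. If ρ > β2/(β1 - β2), then Υα1 < Υβ2 < Υα2 < Υρ < Υβ1. -/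
/-! Multiplying by `B = ρ β₁ + (1 - ρ) β₂ > 0`, the five indices become the numerators
`-ρ(1-ρ)Δ`, `(1-ρ)β₂`, `ρ(1-ρ)Δ`, `ρΔ`, `ρβ₁` with `Δ = β₁ - β₂`. Consecutive ones compare
by sign, by the hypothesis `β₂ < ρΔ`, by `1 - ρ < 1` and by `ρβ₂ > 0` respectively. -/

theorem one_sub_div_eq_div_of_add_eq {K : Type*} [Field K] {a c b : K} (hb : b ≠ 0)
    (h : a + c = b) : 1 - a / b = c / b := by
  rw [one_sub_div hb, ← h, add_sub_cancel_left]

theorem sensitivity_order_MB_case_d (b1 b2 rho : ℝ)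
    (hb2 : 0 < b2) (hb2b1 : b2 < b1) (hrho0 : 0 < rho) (hrho1 : rho < 1)
    (h : b2 / (b1 - b2) < rho) :
    -(rho * (1 - rho) * (b1 - b2)) / (rho * b1 + (1 - rho) * b2) <
      1 - rho * b1 / (rho * b1 + (1 - rho) * b2) ∧
    1 - rho * b1 / (rho * b1 + (1 - rho) * b2) <
      rho * (1 - rho) * (b1 - b2) / (rho * b1 + (1 - rho) * b2) ∧
    rho * (1 - rho) * (b1 - b2) / (rho * b1 + (1 - rho) * b2) <
      1 - b2 / (rho * b1 + (1 - rho) * b2) ∧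
    1 - b2 / (rho * b1 + (1 - rho) * b2) <
      1 - (1 - rho) * b2 / (rho * b1 + (1 - rho) * b2) := by
  have hΔ : 0 < b1 - b2 := sub_pos.mpr hb2b1
  have hρ' : 0 < 1 - rho := sub_pos.mpr hrho1
  have hb2_lt : b2 < rho * (b1 - b2) := (div_lt_iff₀ hΔ).mp h
  set B := rho * b1 + (1 - rho) * b2
  have hB : 0 < B := add_pos (mul_pos hrho0 (hb2.trans hb2b1)) (mul_pos hρ' hb2)
  rw [one_sub_div_eq_div_of_add_eq hB.ne' (b := B) (c := (1 - rho) * b2) rfl,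
    one_sub_div_eq_div_of_add_eq hB.ne' (c := rho * (b1 - b2)) (by ring),
    one_sub_div_eq_div_of_add_eq hB.ne' (c := rho * b1) (by ring)]
  refine ⟨?_, ?_, ?_, ?_⟩ <;> refine div_lt_div_of_pos_right ?_ hB
  · have : 0 < rho * (1 - rho) * (b1 - b2) := by positivity
    have : 0 < (1 - rho) * b2 := by positivity
    linarith
  · rw [mul_comm rho, mul_assoc]
    exact mul_lt_mul_of_pos_left hb2_lt hρ'
  · rw [mul_right_comm]
    exact mul_lt_of_lt_one_right (by positivity) (sub_lt_self 1 hrho0)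
  · rw [mul_sub]
    exact sub_lt_self _ (mul_pos hrho0 hb2)
end
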